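/- arXiv:2502.05152 — 4 statements merged into one kernel-verified Lean document; each statement's English description precedes it below -/
import Mathlib

section
/- For every integer s ≥ 1 and every μ > 0, the function ρ ↦ W(ρ,s,μ) is strictly increasing on the open interval (0,1). -/
open Finset

/-- `T1(ρ,s) = (ρ s)^s / ((1-ρ) s!)`. -/
noncomputable def T1 (ρ : ℝ) (s : ℕ) : ℝ :=
  (ρ * (s : ℝ)) ^ s / ((1 - ρ) * (Nat.factorial s : ℝ))

/-- `T2(ρ,s) = Σ_{r=0}^{s-1} (ρ s)^r / r!`. -/
noncomputable def T2 (ρ : ℝ) (s : ℕ) : ℝ :=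
  ∑ r ∈ Finset.range s, (ρ * (s : ℝ)) ^ r / (Nat.factorial r : ℝ)

/-- The Erlang delay probability `P(ρ,s)`. -/
noncomputable def ErlangP (ρ : ℝ) (s : ℕ) : ℝ :=
  (ρ * (s : ℝ)) ^ s / ((1 - ρ) * (Nat.factorial s : ℝ) * (T1 ρ s + T2 ρ s))

/-- The M/M/s expected time in system `W(ρ,s,μ) = P(ρ,s)/(μ s (1-ρ)) + 1/μ`. -/
noncomputable def Wtime (ρ : ℝ) (s : ℕ) (μ : ℝ) : ℝ :=
  ErlangP ρ s / (μ * (s : ℝ) * (1 - ρ)) + 1 / μ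


/-!
Clearing denominators gives
`(1 - ρ) / P(ρ,s) = (1 - ρ) + ∑_{r<s} (1 - ρ)² (s!/r!) / (ρ s)^(s-r)`,
a positive, strictly decreasing function of `ρ` on `(0,1)`. Hence `P(ρ,s) / (1 - ρ)` is strictly
increasing there, and so is `W(ρ,s,μ) = (μ s)⁻¹ · P(ρ,s) / (1 - ρ) + 1/μ`.
-/

open Nat

theorem one_sub_div_ErlangP_eq {ρ : ℝ} (s : ℕ) (hρ0 : 0 < ρ) (hρ1 : ρ < 1) :
    (1 - ρ) / ErlangP ρ s =
      (1 - ρ) + ∑ r ∈ range s, (1 - ρ) ^ 2 * (s ! / r !) / (ρ * s) ^ (s - r) := by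
  rcases Nat.eq_zero_or_pos s with rfl | hs
  · simp [ErlangP, T1, T2, sub_ne_zero.2 hρ1.ne']
  have ha : ρ * s ≠ 0 := (mul_pos hρ0 (by exact_mod_cast hs)).ne'
  have h1ρ : 1 - ρ ≠ 0 := sub_ne_zero.2 hρ1.ne'
  have hterm : ∀ r ∈ range s, (1 - ρ) ^ 2 * (s ! / r !) / (ρ * s) ^ (s - r) =
      (1 - ρ) ^ 2 * s ! / (ρ * s) ^ s * ((ρ * s) ^ r / r !) := by
    intro r hr
    rw [pow_sub₀ _ ha (mem_range.1 hr).le]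
    field_simp
  rw [sum_congr rfl hterm, ← mul_sum, ← T2, ErlangP, T1]
  field_simp

theorem strictAntiOn_one_sub_div_ErlangP (s : ℕ) :
    StrictAntiOn (fun ρ => (1 - ρ) / ErlangP ρ s) (Set.Ioo 0 1) := by
  rintro x ⟨hx0, hx1⟩ y ⟨hy0, hy1⟩ hxy
  simp only [one_sub_div_ErlangP_eq s hx0 hx1, one_sub_div_ErlangP_eq s hy0 hy1]
  refine add_lt_add_of_lt_of_le (by linarith) (sum_le_sum fun r hr => ?_)
  have : 0 ≤ 1 - y := by linarith
  have : 0 < x * s := mul_pos hx0 (by exact_mod_cast (mem_range.1 hr).pos)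
  gcongr

theorem one_sub_div_ErlangP_pos {ρ : ℝ} (s : ℕ) (hρ0 : 0 < ρ) (hρ1 : ρ < 1) :
    0 < (1 - ρ) / ErlangP ρ s := by
  rw [one_sub_div_ErlangP_eq s hρ0 hρ1]
  refine add_pos_of_pos_of_nonneg (by linarith) (sum_nonneg fun r _ => ?_)
  have : 0 ≤ ρ * s := by positivity
  positivity

theorem strictMonoOn_ErlangP_div_one_sub (s : ℕ) :
    StrictMonoOn (fun ρ => ErlangP ρ s / (1 - ρ)) (Set.Ioo 0 1) := by
  intro x hx y hy hxy
  dsimp only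
  rw [← inv_div (1 - x), ← inv_div (1 - y)]
  exact inv_strictAnti₀ (one_sub_div_ErlangP_pos s hy.1 hy.2)
    (strictAntiOn_one_sub_div_ErlangP s hx hy hxy)

theorem Wtime_eq (ρ : ℝ) (s : ℕ) (μ : ℝ) :
    Wtime ρ s μ = (μ * s)⁻¹ * (ErlangP ρ s / (1 - ρ)) + 1 / μ := by
  simp only [Wtime, div_eq_mul_inv, mul_inv]
  ring

/-- For every integer `s ≥ 1` and every `μ > 0`, the function
`ρ ↦ W(ρ,s,μ)` is strictly increasing on the open interval `(0,1)`. -/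
theorem Wtime_strictMonoOn (s : ℕ) (hs : 1 ≤ s) (μ : ℝ) (hμ : 0 < μ) :
    StrictMonoOn (fun ρ : ℝ => Wtime ρ s μ) (Set.Ioo (0 : ℝ) 1) := by
  intro x hx y hy hxy
  have hscale : 0 < (μ * s)⁻¹ := inv_pos.2 (mul_pos hμ (by exact_mod_cast hs))
  simp only [Wtime_eq]
  gcongr ?_ + _
  exact mul_lt_mul_of_pos_left (strictMonoOn_ErlangP_div_one_sub s hx hy hxy) hscale
end

section
/- For every integer s ≥ 1 and every μ > 0, the function ρ ↦ W(ρ,s,μ) is strictly convex on the open interval (0,1). -/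
/-
`W = 1/μ + C(ρ) / (μ s (1 - ρ))` with `C = ErlangP`, so it suffices that `C` is positive, increasing
and convex on `(0, 1)`: the product of such a function with the strictly convex, increasing
`(1 - ρ)⁻¹` is strictly convex.

Clearing denominators gives `1 / C(ρ) = Q(1/ρ)` for a polynomial `Q` with nonnegative coefficients
`c_k = k s! / ((s - k)! s^(k+1))`. The second derivative of `x ↦ 1 / Q(1/x)` is
`x⁻² K(1/x) / Q(1/x)³` with `K = 2(XQ')² - Q(X²Q'' + 2XQ')`, whose `N`-th coefficient is
`½ Σ_{i+j=N} c_i c_j (6ij - N(N+1))`. For fixed `N`, `c_i c_j` is `ij` times a multiple of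
`s!/(s-i)! · s!/(s-j)!`, which grows as `(i, j)` becomes more balanced, i.e. monovaries with `ij`.
Chebyshev's sum inequality, together with the mean `N(N+1)/6` of `ij` over `i + j = N`, `i, j ≥ 1`,
makes every coefficient of `K` nonnegative.
-/

open Finset

open Polynomial

section StrictConvexMul

variable {𝕜 E : Type*} [Field 𝕜] [LinearOrder 𝕜] [IsStrictOrderedRing 𝕜] [AddCommGroup E]
  [Module 𝕜 E] {s : Set E} {f g : E → 𝕜}

lemma ConvexOn.mul_strictConvexOn (hf : ConvexOn 𝕜 s f) (hg : StrictConvexOn 𝕜 s g)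
    (hf₀ : ∀ ⦃x⦄, x ∈ s → 0 < f x) (hg₀ : ∀ ⦃x⦄, x ∈ s → 0 ≤ g x) (hfg : MonovaryOn f g s) :
    StrictConvexOn 𝕜 s (f * g) := by
  refine ⟨hf.1, fun x hx y hy hxy a b ha hb hab ↦ ?_⟩
  have hz := hf.1 hx hy ha.le hb.le hab
  have hfz : f (a • x + b • y) ≤ a * f x + b * f y := hf.2 hx hy ha.le hb.le hab
  have hgz : g (a • x + b • y) < a * g x + b * g y := hg.2 hx hy hxy ha hb hab
  have hrearr := monovaryOn_iff_mul_rearrangement.1 hfg hx hy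
  simp only [Pi.mul_apply, smul_eq_mul]
  calc f (a • x + b • y) * g (a • x + b • y)
      < f (a • x + b • y) * (a * g x + b * g y) := mul_lt_mul_of_pos_left hgz (hf₀ hz)
    _ ≤ (a * f x + b * f y) * (a * g x + b * g y) :=
        mul_le_mul_of_nonneg_right hfz (by have := hg₀ hx; have := hg₀ hy; positivity)
    _ ≤ a * (f x * g x) + b * (f y * g y) := by
        linear_combination (a * b) * hrearr + (a * (f x * g x) + b * (f y * g y)) * hab

end StrictConvexMul

lemma strictConvexOn_inv_one_sub : StrictConvexOn ℝ (Set.Iio 1) fun x : ℝ ↦ (1 - x)⁻¹ := by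
  have hinv := strictConvexOn_zpow (m := -1) (by norm_num) (by norm_num)
  refine ⟨convex_Iio 1, fun x hx y hy hxy a b ha hb hab ↦ ?_⟩
  have key := hinv.2 (x := 1 - x) (y := 1 - y) (by simpa using hx) (by simpa using hy)
    (by intro h; exact hxy (by linarith)) ha hb hab
  simp only [zpow_neg_one, smul_eq_mul] at key ⊢
  rwa [show 1 - (a * x + b * y) = a * (1 - x) + b * (1 - y) by linear_combination -hab]

lemma monotoneOn_inv_one_sub : MonotoneOn (fun x : ℝ ↦ (1 - x)⁻¹) (Set.Iio 1) :=
  fun x hx y hy hxy ↦ inv_anti₀ (by simpa using hy) (by linarith)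

lemma Finset.Nat.sum_antidiagonal_succ_mul_succ (n : ℕ) :
    ∑ p ∈ antidiagonal n, ((p.1 : ℝ) + 1) * ((p.2 : ℝ) + 1)
      = (n + 1) * (n + 2) * (n + 3) / 6 := by
  have hsnd : ∀ m : ℕ, ∑ p ∈ antidiagonal m, ((p.2 : ℝ) + 1) = (m + 1) * (m + 2) / 2 := by
    intro m
    induction m with
    | zero => simp
    | succ m ih =>
      rw [Finset.Nat.sum_antidiagonal_succ, ih]
      push_cast; ring
  induction n with
  | zero => norm_num
  | succ n ih =>
    have hsplit : ∀ p : ℕ × ℕ, (((p.1 + 1 : ℕ) : ℝ) + 1) * ((p.2 : ℝ) + 1)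
        = ((p.1 : ℝ) + 1) * ((p.2 : ℝ) + 1) + ((p.2 : ℝ) + 1) := fun p ↦ by push_cast; ring
    rw [Finset.Nat.sum_antidiagonal_succ]
    simp only [hsplit, sum_add_distrib, ih, hsnd]
    push_cast; ring

/-- Chebyshev's sum inequality for `φ u` against `φ = (i+1)(j+1)`, whose mean over the antidiagonal
is `(n + 2)(n + 3) / 6`. -/
lemma MonovaryOn.sum_antidiagonal_mul_sub_nonneg {n : ℕ} {u : ℕ × ℕ → ℝ}
    (hu₀ : ∀ p ∈ antidiagonal n, 0 ≤ u p)
    (hu : MonovaryOn u (fun p ↦ ((p.1 : ℝ) + 1) * ((p.2 : ℝ) + 1)) (antidiagonal n)) :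
    0 ≤ ∑ p ∈ antidiagonal n, ((p.1 : ℝ) + 1) * ((p.2 : ℝ) + 1) * u p *
      (6 * (((p.1 : ℝ) + 1) * ((p.2 : ℝ) + 1)) - (n + 2) * (n + 3)) := by
  set φ : ℕ × ℕ → ℝ := fun p ↦ ((p.1 : ℝ) + 1) * ((p.2 : ℝ) + 1)
  have hφ₀ : ∀ p, 0 ≤ φ p := fun p ↦ by positivity
  have hmono : MonovaryOn (fun p ↦ φ p * u p) φ (antidiagonal n) := fun p hp q hq hpq ↦
    mul_le_mul hpq.le (hu hp hq hpq) (hu₀ p hp) (hφ₀ q)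
  have hcheb := hmono.sum_mul_sum_le_card_mul_sum
  rw [Finset.Nat.card_antidiagonal, Finset.Nat.sum_antidiagonal_succ_mul_succ] at hcheb
  have hexpand : ∑ p ∈ antidiagonal n, φ p * u p * (6 * φ p - (n + 2) * (n + 3))
      = 6 * ∑ p ∈ antidiagonal n, φ p * u p * φ p
        - (n + 2) * (n + 3) * ∑ p ∈ antidiagonal n, φ p * u p := by
    rw [mul_sum, mul_sum, ← sum_sub_distrib]
    exact sum_congr rfl fun _ _ ↦ by ring
  rw [hexpand]
  push_cast at hcheb
  have hn : (0 : ℝ) < n + 1 := by positivity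
  nlinarith

namespace Nat

/-- Log-concavity of `k ↦ s.descFactorial k`: each step multiplies it by `s - k`, which decreases
in `k`. -/
lemma descFactorial_mul_descFactorial_le_of_add_le (s : ℕ) {a d : ℕ} :
    ∀ {t : ℕ}, a + t ≤ d →
      s.descFactorial a * s.descFactorial (d + t) ≤ s.descFactorial (a + t) * s.descFactorial d
  | 0, _ => le_rfl
  | t + 1, h => by
    have step : s.descFactorial a * s.descFactorial (d + t + 1)
        ≤ s.descFactorial (a + 1) * s.descFactorial (d + t) := by
      rw [descFactorial_succ, descFactorial_succ]
      calc s.descFactorial a * ((s - (d + t)) * s.descFactorial (d + t))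
          = (s - (d + t)) * (s.descFactorial a * s.descFactorial (d + t)) := by ring
        _ ≤ (s - a) * (s.descFactorial a * s.descFactorial (d + t)) := by gcongr; omega
        _ = (s - a) * s.descFactorial a * s.descFactorial (d + t) := by ring
    calc s.descFactorial a * s.descFactorial (d + (t + 1))
        ≤ s.descFactorial (a + 1) * s.descFactorial (d + t) := step
      _ ≤ s.descFactorial (a + 1 + t) * s.descFactorial d :=
          descFactorial_mul_descFactorial_le_of_add_le s (by omega)
      _ = s.descFactorial (a + (t + 1)) * s.descFactorial d := by rw [add_right_comm, add_assoc]

lemma descFactorial_mul_descFactorial_le_of_mul_le (s : ℕ) {a b c d : ℕ} (hsum : a + b = c + d)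
    (hprod : a * b ≤ c * d) :
    s.descFactorial a * s.descFactorial b ≤ s.descFactorial c * s.descFactorial d := by
  wlog hab : a ≤ b generalizing a b
  · rw [mul_comm]; exact this (by omega) (by linarith) (by omega)
  wlog hcd : c ≤ d generalizing c d
  · rw [mul_comm (s.descFactorial c)]; exact this (by omega) (by linarith) (by omega)
  have hac : a ≤ c := by
    by_contra! h
    nlinarith
  obtain ⟨t, rfl⟩ := Nat.exists_eq_add_of_le hac
  obtain rfl : b = d + t := by omega
  exact descFactorial_mul_descFactorial_le_of_add_le s (by omega)

end Nat

namespace Polynomial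

lemma coeff_X_mul_derivative {R : Type*} [CommSemiring R] (p : R[X]) (n : ℕ) :
    (X * derivative p).coeff n = n * p.coeff n := by
  cases n with
  | zero => simp
  | succ n => rw [coeff_X_mul, coeff_derivative]; push_cast; ring

lemma eval_nonneg_of_coeff_nonneg {R : Type*} [CommSemiring R] [PartialOrder R] [IsOrderedRing R]
    {p : R[X]} (hp : ∀ n, 0 ≤ p.coeff n) {t : R} (ht : 0 ≤ t) : 0 ≤ p.eval t := by
  rw [eval_eq_sum_range]
  exact sum_nonneg fun n _ ↦ mul_nonneg (hp n) (pow_nonneg ht n)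

lemma coeff_mul_pow_le_eval {R : Type*} [CommSemiring R] [PartialOrder R] [IsOrderedRing R]
    {p : R[X]} (hp : ∀ n, 0 ≤ p.coeff n) {t : R} (ht : 0 ≤ t) (k : ℕ) :
    p.coeff k * t ^ k ≤ p.eval t := by
  rw [eval_eq_sum_range]
  by_cases hk : k ∈ range (p.natDegree + 1)
  · exact single_le_sum (fun n _ ↦ mul_nonneg (hp n) (pow_nonneg ht n)) hk
  · rw [coeff_eq_zero_of_natDegree_lt (by simpa using hk), zero_mul]
    exact sum_nonneg fun n _ ↦ mul_nonneg (hp n) (pow_nonneg ht n)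

/-- The second derivative of `x ↦ 1 / Q(1/x)` is `x⁻² K(1/x) / Q(1/x)³` for this `K`
(`hasDerivAt_inv_mul_eval_inv_div`). -/
noncomputable def reciprocalCurvature {R : Type*} [CommRing R] (Q : R[X]) : R[X] :=
  2 * (X * derivative Q) ^ 2 - Q * (X * derivative (X * derivative Q) + X * derivative Q)

lemma two_mul_coeff_reciprocalCurvature {R : Type*} [CommRing R] (Q : R[X]) (N : ℕ) :
    2 * (reciprocalCurvature Q).coeff N = ∑ p ∈ antidiagonal N,
      Q.coeff p.1 * Q.coeff p.2 * (6 * p.1 * p.2 - N * (N + 1)) := by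
  have hterm : (reciprocalCurvature Q).coeff N = ∑ p ∈ antidiagonal N,
      Q.coeff p.1 * Q.coeff p.2 * (2 * p.1 * p.2 - p.2 * (p.2 + 1)) := by
    rw [reciprocalCurvature, coeff_sub, show (2 : R[X]) = C 2 by rfl, coeff_C_mul, pow_two,
      coeff_mul, coeff_mul, mul_sum, ← sum_sub_distrib]
    refine sum_congr rfl fun p _ ↦ ?_
    rw [coeff_add, coeff_X_mul_derivative, coeff_X_mul_derivative, coeff_X_mul_derivative,
      coeff_X_mul_derivative]
    ring
  rw [hterm, two_mul]
  nth_rewrite 1 [← Nat.sum_antidiagonal_swap]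
  rw [← sum_add_distrib]
  refine sum_congr rfl fun p hp ↦ ?_
  obtain rfl := mem_antidiagonal.mp hp
  simp only [Prod.fst_swap, Prod.snd_swap, Nat.cast_add]
  ring

lemma two_mul_coeff_add_two_reciprocalCurvature {R : Type*} [CommRing R] {Q : R[X]}
    (hQ : Q.coeff 0 = 0) (n : ℕ) :
    2 * (reciprocalCurvature Q).coeff (n + 2) = ∑ p ∈ antidiagonal n,
      Q.coeff (p.1 + 1) * Q.coeff (p.2 + 1) *
        (6 * (((p.1 : R) + 1) * ((p.2 : R) + 1)) - (n + 2) * (n + 3)) := by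
  rw [two_mul_coeff_reciprocalCurvature, Nat.sum_antidiagonal_succ, Nat.sum_antidiagonal_succ']
  simp only [hQ, zero_mul, mul_zero, zero_add]
  refine sum_congr rfl fun p _ ↦ ?_
  push_cast
  ring

variable {Q : ℝ[X]}

lemma hasDerivAt_inv_eval_inv {x : ℝ} (hx : x ≠ 0) (hQ : Q.eval x⁻¹ ≠ 0) :
    HasDerivAt (fun y ↦ (Q.eval y⁻¹)⁻¹)
      (x⁻¹ * (X * derivative Q).eval x⁻¹ / Q.eval x⁻¹ ^ 2) x := by
  refine (((Q.hasDerivAt x⁻¹).inv hQ).comp x (hasDerivAt_inv hx)).congr_deriv ?_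
  simp only [eval_mul, eval_X]
  field_simp

lemma hasDerivAt_inv_mul_eval_inv_div {x : ℝ} (hx : x ≠ 0) (hQ : Q.eval x⁻¹ ≠ 0) :
    HasDerivAt (fun y ↦ y⁻¹ * (X * derivative Q).eval y⁻¹ / Q.eval y⁻¹ ^ 2)
      (x⁻¹ ^ 2 * (reciprocalCurvature Q).eval x⁻¹ / Q.eval x⁻¹ ^ 3) x := by
  have hnum := (hasDerivAt_id' x⁻¹).mul ((X * derivative Q).hasDerivAt x⁻¹)
  have hden := (Q.hasDerivAt x⁻¹).pow 2
  refine ((hnum.div hden (pow_ne_zero 2 hQ)).comp x (hasDerivAt_inv hx)).congr_deriv ?_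
  simp only [reciprocalCurvature, eval_mul, eval_X, eval_sub, eval_add, eval_pow, derivative_mul,
    derivative_X, one_mul, eval_ofNat, Pi.mul_apply, Pi.pow_apply]
  generalize eval x⁻¹ Q = q at hQ ⊢
  field_simp
  ring

lemma convexOn_inv_eval_inv (hQ : ∀ t, 0 < t → 0 < Q.eval t)
    (hK : ∀ t, 0 < t → 0 ≤ (reciprocalCurvature Q).eval t) :
    ConvexOn ℝ (Set.Ioi 0) fun x ↦ (Q.eval x⁻¹)⁻¹ := by
  have hQx : ∀ x : ℝ, 0 < x → Q.eval x⁻¹ ≠ 0 := fun x hx ↦ (hQ _ (inv_pos.2 hx)).ne'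
  refine convexOn_of_hasDerivWithinAt2_nonneg (convex_Ioi 0)
    (f' := fun x ↦ x⁻¹ * (X * derivative Q).eval x⁻¹ / Q.eval x⁻¹ ^ 2)
    (f'' := fun x ↦ x⁻¹ ^ 2 * (reciprocalCurvature Q).eval x⁻¹ / Q.eval x⁻¹ ^ 3)
    (fun x hx ↦ (hasDerivAt_inv_eval_inv hx.ne' (hQx x hx)).continuousAt.continuousWithinAt)
    (fun x hx ↦ ?_) (fun x hx ↦ ?_) (fun x hx ↦ ?_) <;> simp only [interior_Ioi] at hx ⊢
  · exact (hasDerivAt_inv_eval_inv hx.ne' (hQx x hx)).hasDerivWithinAt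
  · exact (hasDerivAt_inv_mul_eval_inv_div hx.ne' (hQx x hx)).hasDerivWithinAt
  · have := hQ _ (inv_pos.2 hx)
    have := hK _ (inv_pos.2 hx)
    positivity

lemma monotoneOn_inv_eval_inv (hQ : ∀ t, 0 < t → Q.eval t ≠ 0)
    (hθ : ∀ t, 0 < t → 0 ≤ (X * derivative Q).eval t) :
    MonotoneOn (fun x ↦ (Q.eval x⁻¹)⁻¹) (Set.Ioi 0) := by
  refine monotoneOn_of_hasDerivWithinAt_nonneg (convex_Ioi 0)
    (f' := fun x ↦ x⁻¹ * (X * derivative Q).eval x⁻¹ / Q.eval x⁻¹ ^ 2)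
    (fun x hx ↦ (hasDerivAt_inv_eval_inv hx.ne' (hQ _ (inv_pos.2 hx))).continuousAt
      |>.continuousWithinAt) (fun x hx ↦ ?_) (fun x hx ↦ ?_) <;> simp only [interior_Ioi] at hx ⊢
  · exact (hasDerivAt_inv_eval_inv hx.ne' (hQ _ (inv_pos.2 hx))).hasDerivWithinAt
  · have := hθ _ (inv_pos.2 hx)
    have : 0 < x⁻¹ := inv_pos.2 hx
    positivity

end Polynomial

/-- `1 / ErlangP ρ s = (erlangPoly s)(1/ρ)`. Since `s.descFactorial k = 0` for `k > s`, the
coefficient formula `coeff_erlangPoly` holds for every `k`. -/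
noncomputable def erlangPoly (s : ℕ) : ℝ[X] :=
  ∑ k ∈ range (s + 1), C ((k : ℝ) * s.descFactorial k / (s : ℝ) ^ (k + 1)) * X ^ k

lemma coeff_erlangPoly (s k : ℕ) :
    (erlangPoly s).coeff k = (k : ℝ) * s.descFactorial k / (s : ℝ) ^ (k + 1) := by
  simp only [erlangPoly, finsetSum_coeff, coeff_C_mul_X_pow, sum_ite_eq, Finset.mem_range]
  split_ifs with hk
  · rfl
  · rw [Nat.descFactorial_eq_zero_iff_lt.2 (by omega)]
    simp

lemma eval_erlangPoly (s : ℕ) (t : ℝ) :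
    (erlangPoly s).eval t
      = ∑ k ∈ range (s + 1), (k : ℝ) * s.descFactorial k / (s : ℝ) ^ (k + 1) * t ^ k := by
  simp [erlangPoly, eval_finsetSum]

lemma eval_inv_erlangPoly_mul_pow_eq_sum (s : ℕ) {ρ : ℝ} (hρ : 0 < ρ) :
    (erlangPoly s).eval ρ⁻¹ * (ρ * s) ^ s
      = ∑ r ∈ range (s + 1),
          ((s : ℝ) - r) / s * (s.factorial / r.factorial * (ρ * s) ^ r) := by
  rw [eval_erlangPoly, sum_mul, ← sum_range_reflect]
  refine sum_congr rfl fun r hr ↦ ?_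
  have hrs : r ≤ s := by rw [Finset.mem_range] at hr; omega
  have hD : (s.descFactorial (s - r) : ℝ) = s.factorial / r.factorial := by
    rw [eq_div_iff (by positivity), mul_comm]
    have := Nat.factorial_mul_descFactorial (Nat.sub_le s r)
    rw [Nat.sub_sub_self hrs] at this
    exact_mod_cast this
  have hpow : (ρ * s) ^ s = (ρ * s) ^ (s - r) * (ρ * s) ^ r := by
    rw [← pow_add, Nat.sub_add_cancel hrs]
  rw [Nat.add_sub_cancel, hD, hpow, Nat.cast_sub hrs, mul_pow, inv_pow]
  rcases eq_or_ne (s : ℝ) 0 with hs | hs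
  · simp [hs]
  · field_simp
    ring

lemma eval_inv_erlangPoly_mul_pow {s : ℕ} (hs : 1 ≤ s) {ρ : ℝ} (hρ : 0 < ρ) :
    (erlangPoly s).eval ρ⁻¹ * (ρ * s) ^ s
      = (ρ * s) ^ s + (1 - ρ) * (s.factorial * T2 ρ s) := by
  have hs' : (s : ℝ) ≠ 0 := by positivity
  set t : ℕ → ℝ := fun r ↦ s.factorial / r.factorial * (ρ * s) ^ r
  have hT2 : s.factorial * T2 ρ s = ∑ r ∈ range s, t r := by
    simp only [T2, mul_sum, t]
    exact sum_congr rfl fun r _ ↦ by ring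
  have hshift : ∑ r ∈ range (s + 1), (r : ℝ) / s * t r = ρ * ∑ r ∈ range s, t r := by
    rw [sum_range_succ', mul_sum]
    simp only [Nat.cast_zero, zero_div, zero_mul, add_zero]
    refine sum_congr rfl fun r _ ↦ ?_
    simp only [t, Nat.factorial_succ]
    push_cast
    field_simp
    ring
  have hsplit : ∑ r ∈ range (s + 1), ((s : ℝ) - r) / s * t r
      = ∑ r ∈ range (s + 1), t r - ∑ r ∈ range (s + 1), (r : ℝ) / s * t r := by
    rw [← sum_sub_distrib]
    exact sum_congr rfl fun r _ ↦ by field_simp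
  rw [eval_inv_erlangPoly_mul_pow_eq_sum s hρ, hsplit, hshift, sum_range_succ, hT2]
  simp only [t]
  field_simp
  ring

lemma ErlangP_eq_inv_eval_erlangPoly {s : ℕ} (hs : 1 ≤ s) {ρ : ℝ} (hρ₀ : 0 < ρ)
    (hρ₁ : ρ < 1) :
    ErlangP ρ s = ((erlangPoly s).eval ρ⁻¹)⁻¹ := by
  have hT1 : (1 - ρ) * s.factorial * T1 ρ s = (ρ * s) ^ s := by
    unfold T1; field_simp [(by linarith : (1 : ℝ) - ρ ≠ 0)]
  have hden : (1 - ρ) * s.factorial * (T1 ρ s + T2 ρ s)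
      = (erlangPoly s).eval ρ⁻¹ * (ρ * s) ^ s := by
    rw [eval_inv_erlangPoly_mul_pow hs hρ₀, ← hT1]; ring
  rw [ErlangP, hden]
  exact div_mul_cancel_right₀ (pow_ne_zero _ (by positivity)) _

lemma coeff_reciprocalCurvature_erlangPoly_nonneg (s N : ℕ) :
    0 ≤ (reciprocalCurvature (erlangPoly s)).coeff N := by
  suffices 0 ≤ 2 * (reciprocalCurvature (erlangPoly s)).coeff N by linarith
  rcases N with _ | _ | n
  · simp [two_mul_coeff_reciprocalCurvature, coeff_erlangPoly]
  · simp [two_mul_coeff_reciprocalCurvature, Nat.sum_antidiagonal_succ, coeff_erlangPoly]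
  -- `u` monovaries with `(i+1)(j+1)` by the log-concavity of `descFactorial`.
  set u : ℕ × ℕ → ℝ := fun p ↦
    (s.descFactorial (p.1 + 1) * s.descFactorial (p.2 + 1) : ℕ) / (s : ℝ) ^ (n + 4)
  have hterm : ∀ p ∈ antidiagonal n,
      (erlangPoly s).coeff (p.1 + 1) * (erlangPoly s).coeff (p.2 + 1)
        = ((p.1 : ℝ) + 1) * ((p.2 : ℝ) + 1) * u p := by
    intro p hp
    obtain rfl := mem_antidiagonal.mp hp
    simp only [coeff_erlangPoly, u, show p.1 + p.2 + 4 = (p.1 + 1 + 1) + (p.2 + 1 + 1) by ring,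
      pow_add]
    push_cast
    ring
  rw [two_mul_coeff_add_two_reciprocalCurvature (by simp [coeff_erlangPoly])]
  rw [sum_congr rfl fun p hp ↦ by rw [hterm p hp]]
  refine MonovaryOn.sum_antidiagonal_mul_sub_nonneg (fun p _ ↦ by positivity)
    fun p hp q hq hpq ↦ ?_
  have hsum : (p.1 + 1) + (p.2 + 1) = (q.1 + 1) + (q.2 + 1) := by
    rw [mem_coe, HasAntidiagonal.mem_antidiagonal] at hp hq; omega
  have hprod : (p.1 + 1) * (p.2 + 1) ≤ (q.1 + 1) * (q.2 + 1) := by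
    have := hpq.le; dsimp only at this; exact_mod_cast this
  exact div_le_div_of_nonneg_right
    (by exact_mod_cast Nat.descFactorial_mul_descFactorial_le_of_mul_le s hsum hprod)
    (by positivity)

lemma coeff_erlangPoly_nonneg (s k : ℕ) : 0 ≤ (erlangPoly s).coeff k := by
  rw [coeff_erlangPoly]; positivity

lemma eval_erlangPoly_pos {s : ℕ} (hs : 1 ≤ s) {t : ℝ} (ht : 0 < t) :
    0 < (erlangPoly s).eval t := by
  have hs' : (0 : ℝ) < s := by exact_mod_cast hs
  have hcoeff : 0 < (erlangPoly s).coeff 1 := by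
    rw [coeff_erlangPoly, Nat.descFactorial_one]; positivity
  exact (mul_pos hcoeff (pow_pos ht 1)).trans_le
    (coeff_mul_pow_le_eval (coeff_erlangPoly_nonneg s) ht.le 1)

lemma convexOn_ErlangP {s : ℕ} (hs : 1 ≤ s) :
    ConvexOn ℝ (Set.Ioo 0 1) fun ρ ↦ ErlangP ρ s :=
  ((convexOn_inv_eval_inv (fun _ ↦ eval_erlangPoly_pos hs) fun _ ht ↦
      eval_nonneg_of_coeff_nonneg (coeff_reciprocalCurvature_erlangPoly_nonneg s) ht.le).subset
    Set.Ioo_subset_Ioi_self (convex_Ioo 0 1)).congr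
    fun _ hρ ↦ (ErlangP_eq_inv_eval_erlangPoly hs hρ.1 hρ.2).symm

lemma monotoneOn_ErlangP {s : ℕ} (hs : 1 ≤ s) :
    MonotoneOn (fun ρ ↦ ErlangP ρ s) (Set.Ioo 0 1) :=
  ((monotoneOn_inv_eval_inv (fun _ ht ↦ (eval_erlangPoly_pos hs ht).ne') fun _ ht ↦
      eval_nonneg_of_coeff_nonneg (fun k ↦ by
        rw [coeff_X_mul_derivative]; exact mul_nonneg k.cast_nonneg (coeff_erlangPoly_nonneg s k))
        ht.le).mono Set.Ioo_subset_Ioi_self).congr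
    fun _ hρ ↦ (ErlangP_eq_inv_eval_erlangPoly hs hρ.1 hρ.2).symm

lemma ErlangP_pos {s : ℕ} (hs : 1 ≤ s) {ρ : ℝ} (hρ₀ : 0 < ρ) (hρ₁ : ρ < 1) :
    0 < ErlangP ρ s := by
  rw [ErlangP_eq_inv_eval_erlangPoly hs hρ₀ hρ₁]
  exact inv_pos.2 (eval_erlangPoly_pos hs (inv_pos.2 hρ₀))

/-- For every integer `s ≥ 1` and every `μ > 0`, the function
`ρ ↦ W(ρ,s,μ)` is strictly convex on the open interval `(0,1)`. -/
theorem Wtime_strictConvexOn (s : ℕ) (hs : 1 ≤ s) (μ : ℝ) (hμ : 0 < μ) :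
    StrictConvexOn ℝ (Set.Ioo (0 : ℝ) 1) (fun ρ : ℝ => Wtime ρ s μ) := by
  have hc : 0 ≤ (μ * s)⁻¹ := by positivity
  have hprod : StrictConvexOn ℝ (Set.Ioo 0 1)
      ((fun ρ ↦ (μ * s)⁻¹ • ErlangP ρ s) * fun ρ ↦ (1 - ρ)⁻¹) :=
    ((convexOn_ErlangP hs).smul hc).mul_strictConvexOn
      (strictConvexOn_inv_one_sub.subset Set.Ioo_subset_Iio_self (convex_Ioo 0 1))
      (fun ρ hρ ↦ by have := ErlangP_pos hs hρ.1 hρ.2; simp only [smul_eq_mul]; positivity)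
      (fun ρ hρ ↦ inv_nonneg.2 (by linarith [hρ.2]))
      (MonotoneOn.monovaryOn
        (fun _ hx _ hy hxy ↦ smul_le_smul_of_nonneg_left (monotoneOn_ErlangP hs hx hy hxy) hc)
        (monotoneOn_inv_one_sub.mono Set.Ioo_subset_Iio_self))
  refine (hprod.add_const (1 / μ)).congr fun ρ _ ↦ ?_
  simp only [Wtime, Pi.add_apply, Pi.mul_apply, smul_eq_mul, div_eq_mul_inv, mul_inv]
  ring
end

section
/- Let c ≥ 1 be an integer, μ > 0, and let I_j be a finite index set with nonnegative rates λ_i ≥ 0 and binary assignments x_i ∈ {0,1} for i ∈ I_j. Let z ∈ {0,1}, let W ≥ 0 be a real number, and let A, B be real numbers with B ≥ 0 such that A + B·ρ ≤ W^ν(ρ,c) for all ρ ∈ (0,1). Assume that if z = 1 then ρ* := (Σ_{i∈I_j} λ_i x_i)/(μ·c) lies in (0,1) and W ≥ W^ν(ρ*,c)/(μ·c) + 1/μ. Then the cutting-plane inequality W ≥ A·z/(μ·c) + B·(Σ_{i∈I_j} λ_i·(z + x_i − 1))/(μ²·c²) + z/μ holds; that is, the conditional cut (W_cut_exact) is valid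 for all feasible integral solutions. -/
open Finset

/-- The scaled delay function `W^ν(ρ,s) = P(ρ,s)/(1-ρ)`. -/
noncomputable def Wnu (ρ : ℝ) (s : ℕ) : ℝ := ErlangP ρ s / (1 - ρ)

/-!
Split on `z`. For `z = 0` every term `λ_i (x_i − 1)` is `≤ 0`, so the cut's right-hand side is
`≤ 0 ≤ W`. For `z = 1` it equals `(A + B ρ*)/(μ c) + 1/μ`, and the tangent inequality bounds
this by `W^ν(ρ*, c)/(μ c) + 1/μ ≤ W`.
-/

section

variable {ι : Type*}

noncomputable def cutRHS (Ij : Finset ι) (c : ℕ) (μ : ℝ) (lam x : ι → ℝ) (z A B : ℝ) : ℝ :=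
  A * z / (μ * c) + B * (∑ i ∈ Ij, lam i * (z + x i - 1)) / (μ ^ 2 * (c : ℝ) ^ 2) + z / μ

lemma sum_mul_sub_one_nonpos (s : Finset ι) {lam x : ι → ℝ}
    (hlam : ∀ i ∈ s, 0 ≤ lam i) (hx : ∀ i ∈ s, x i ≤ 1) :
    ∑ i ∈ s, lam i * (x i - 1) ≤ 0 :=
  sum_nonpos fun i hi => mul_nonpos_of_nonneg_of_nonpos (hlam i hi) (by linarith [hx i hi])

lemma cutRHS_zero_nonpos (Ij : Finset ι) (c : ℕ) (μ : ℝ) {lam x : ι → ℝ}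
    (hlam : ∀ i ∈ Ij, 0 ≤ lam i) (hx : ∀ i ∈ Ij, x i ≤ 1) (A : ℝ) {B : ℝ} (hB : 0 ≤ B) :
    cutRHS Ij c μ lam x 0 A B ≤ 0 := by
  have hsum : B * ∑ i ∈ Ij, lam i * (x i - 1) ≤ 0 :=
    mul_nonpos_of_nonneg_of_nonpos hB (sum_mul_sub_one_nonpos Ij hlam hx)
  have hden : 0 ≤ μ ^ 2 * (c : ℝ) ^ 2 := by positivity
  simpa [cutRHS] using div_nonpos_of_nonpos_of_nonneg hsum hden

lemma cutRHS_one_eq (Ij : Finset ι) (c : ℕ) (μ : ℝ) (lam x : ι → ℝ) (A B : ℝ) :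
    cutRHS Ij c μ lam x 1 A B =
      (A + B * ((∑ i ∈ Ij, lam i * x i) / (μ * c))) / (μ * c) + 1 / μ := by
  simp only [cutRHS, add_sub_cancel_left]
  ring

end

theorem cut_valid_general {ι : Type*} (Ij : Finset ι) (c : ℕ)
    (μ : ℝ) (hμ : 0 < μ)
    (lam : ι → ℝ) (hlam : ∀ i ∈ Ij, 0 ≤ lam i)
    (x : ι → ℝ) (hx : ∀ i ∈ Ij, x i = 0 ∨ x i = 1)
    (z : ℝ) (hz : z = 0 ∨ z = 1)
    (W : ℝ) (hW : 0 ≤ W)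
    (A B : ℝ) (hB : 0 ≤ B)
    (htan : ∀ ρ ∈ Set.Ioo (0 : ℝ) 1, A + B * ρ ≤ Wnu ρ c)
    (hcond : z = 1 →
      (∑ i ∈ Ij, lam i * x i) / (μ * (c : ℝ)) ∈ Set.Ioo (0 : ℝ) 1 ∧
      Wnu ((∑ i ∈ Ij, lam i * x i) / (μ * (c : ℝ))) c / (μ * (c : ℝ)) + 1 / μ ≤ W) :
    A * z / (μ * (c : ℝ)) +
      B * (∑ i ∈ Ij, lam i * (z + x i - 1)) / (μ ^ 2 * (c : ℝ) ^ 2) + z / μ ≤ W := by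
  change cutRHS Ij c μ lam x z A B ≤ W
  rcases hz with rfl | rfl
  · have hx_le : ∀ i ∈ Ij, x i ≤ 1 := fun i hi => by rcases hx i hi with h | h <;> simp [h]
    exact (cutRHS_zero_nonpos Ij c μ hlam hx_le A hB).trans hW
  · obtain ⟨hρ, hWge⟩ := hcond rfl
    have hμc : 0 ≤ μ * (c : ℝ) := by positivity
    rw [cutRHS_one_eq]
    linarith [div_le_div_of_nonneg_right (htan _ hρ) hμc]

/-- Validity of the conditional cutting-plane inequality
(W_cut_exact) for the M/M/c waiting time: if `A + B·ρ` is an affine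
underestimator of `W^ν(·,c)` on `(0,1)` with `B ≥ 0`, and whenever `z = 1` the
utilization `ρ* = (Σ λ_i x_i)/(μ c)` lies in `(0,1)` and
`W ≥ W^ν(ρ*,c)/(μ c) + 1/μ`, then the cut
`W ≥ A·z/(μ c) + B·(Σ λ_i (z + x_i − 1))/(μ² c²) + z/μ` holds. -/
theorem cut_valid {ι : Type*} (Ij : Finset ι) (c : ℕ) (hc : 1 ≤ c)
    (μ : ℝ) (hμ : 0 < μ)
    (lam : ι → ℝ) (hlam : ∀ i ∈ Ij, 0 ≤ lam i)
    (x : ι → ℝ) (hx : ∀ i ∈ Ij, x i = 0 ∨ x i = 1)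
    (z : ℝ) (hz : z = 0 ∨ z = 1)
    (W : ℝ) (hW : 0 ≤ W)
    (A B : ℝ) (hB : 0 ≤ B)
    (htan : ∀ ρ ∈ Set.Ioo (0 : ℝ) 1, A + B * ρ ≤ Wnu ρ c)
    (hcond : z = 1 →
      (∑ i ∈ Ij, lam i * x i) / (μ * (c : ℝ)) ∈ Set.Ioo (0 : ℝ) 1 ∧
      Wnu ((∑ i ∈ Ij, lam i * x i) / (μ * (c : ℝ))) c / (μ * (c : ℝ)) + 1 / μ ≤ W) :
    A * z / (μ * (c : ℝ)) +
      B * (∑ i ∈ Ij, lam i * (z + x i - 1)) / (μ ^ 2 * (c : ℝ) ^ 2) + z / μ ≤ W :=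
  cut_valid_general Ij c μ hμ lam hlam x hx z hz W hW A B hB htan hcond
end

section
/- Let c ≥ 1 be an integer, μ > 0, and let I_j be a finite index set with nonnegative rates λ_i ≥ 0 and binary assignments x_i ∈ {0,1} for i ∈ I_j. Let κ ≥ 0 be a real scaling factor (κ = (1 + c_k²)/2 for a service-time squared coefficient of variation c_k² ≥ 0). Let z ∈ {0,1}, let W ≥ 0 be a real number, and let A, B be real numbers with B ≥ 0 such that A + B·ρ ≤ W^ν(ρ,c) for all ρ ∈ (0,1). Assume that if z = 1 then ρ* := (Σ_{i∈I_j} λ_i x_i)/(μ·c) lies in (0,1) and W ≥ κ·W^ν(ρ*,c)/(μ·c) + 1/μ. Then the scaled cutting-plane inequality W ≥ κ·(A·z/(μ·c) + B·(Σ_{i∈I_j} λ_i·(z + x_i − 1))/(μ²·c²)) + z/μ holds; that is, the conditional cut for the M/G/c approximation is valid. -/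
open Finset

/-!
For `z = 0` the cut is `κ B / (μ c)²` times `∑ λ_i (x_i - 1) ≤ 0`, hence below `0 ≤ W`.
For `z = 1` it is the Allen–Cunneen time in system with `W^ν(ρ*, c)` replaced by its tangent
underestimator `A + B ρ*`, hence below the time itself and so below `W`.
-/

noncomputable def allenCunneenCut {ι : Type*} (Ij : Finset ι) (lam x : ι → ℝ)
    (μ c κ A B z : ℝ) : ℝ :=
  κ * (A * z / (μ * c) + B * (∑ i ∈ Ij, lam i * (z + x i - 1)) / (μ ^ 2 * c ^ 2)) + z / μ

section

variable {ι : Type*} (Ij : Finset ι) (lam x : ι → ℝ) (μ c κ A B : ℝ)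

theorem allenCunneenCut_zero_nonpos (hlam : ∀ i ∈ Ij, 0 ≤ lam i) (hx : ∀ i ∈ Ij, x i ≤ 1)
    (hκ : 0 ≤ κ) (hB : 0 ≤ B) : allenCunneenCut Ij lam x μ c κ A B 0 ≤ 0 := by
  have hsum : ∑ i ∈ Ij, lam i * (0 + x i - 1) ≤ 0 :=
    sum_nonpos fun i hi => mul_nonpos_of_nonneg_of_nonpos (hlam i hi) (by linarith [hx i hi])
  have hterm : B * (∑ i ∈ Ij, lam i * (0 + x i - 1)) / (μ ^ 2 * c ^ 2) ≤ 0 :=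
    div_nonpos_of_nonpos_of_nonneg (mul_nonpos_of_nonneg_of_nonpos hB hsum) (by positivity)
  simpa [allenCunneenCut] using mul_nonpos_of_nonneg_of_nonpos hκ hterm

theorem allenCunneenCut_one :
    allenCunneenCut Ij lam x μ c κ A B 1 =
      κ * (A + B * ((∑ i ∈ Ij, lam i * x i) / (μ * c))) / (μ * c) + 1 / μ := by
  simp only [allenCunneenCut, add_sub_cancel_left]
  ring

end

theorem cut_valid_mgc_general {ι : Type*} (Ij : Finset ι) (c : ℕ)
    (μ : ℝ) (hμ : 0 < μ)
    (lam : ι → ℝ) (hlam : ∀ i ∈ Ij, 0 ≤ lam i)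
    (x : ι → ℝ) (hx : ∀ i ∈ Ij, x i = 0 ∨ x i = 1)
    (κ : ℝ) (hκ : 0 ≤ κ)
    (z : ℝ) (hz : z = 0 ∨ z = 1)
    (W : ℝ) (hW : 0 ≤ W)
    (A B : ℝ) (hB : 0 ≤ B)
    (htan : ∀ ρ ∈ Set.Ioo (0 : ℝ) 1, A + B * ρ ≤ Wnu ρ c)
    (hcond : z = 1 →
      (∑ i ∈ Ij, lam i * x i) / (μ * (c : ℝ)) ∈ Set.Ioo (0 : ℝ) 1 ∧
      κ * Wnu ((∑ i ∈ Ij, lam i * x i) / (μ * (c : ℝ))) c / (μ * (c : ℝ)) + 1 / μ ≤ W) :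
    κ * (A * z / (μ * (c : ℝ)) +
        B * (∑ i ∈ Ij, lam i * (z + x i - 1)) / (μ ^ 2 * (c : ℝ) ^ 2)) + z / μ ≤ W := by
  change allenCunneenCut Ij lam x μ c κ A B z ≤ W
  rcases hz with rfl | rfl
  · have hx_le : ∀ i ∈ Ij, x i ≤ 1 := fun i hi => by rcases hx i hi with h | h <;> simp [h]
    exact (allenCunneenCut_zero_nonpos Ij lam x μ c κ A B hlam hx_le hκ hB).trans hW
  · obtain ⟨hρ, hWρ⟩ := hcond rfl
    rw [allenCunneenCut_one]
    refine le_trans ?_ hWρ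
    gcongr
    exact htan _ hρ

/-- Validity of the scaled conditional cutting-plane inequality
for the M/G/c (Allen–Cunneen) approximation with scaling factor
`κ = (1 + c_k²)/2 ≥ 0`: if `A + B·ρ` underestimates `W^ν(·,c)` on `(0,1)` with
`B ≥ 0`, and whenever `z = 1` the utilization `ρ* = (Σ λ_i x_i)/(μ c)` lies in
`(0,1)` and `W ≥ κ·W^ν(ρ*,c)/(μ c) + 1/μ`, then the scaled cut
`W ≥ κ·(A·z/(μ c) + B·(Σ λ_i (z + x_i − 1))/(μ² c²)) + z/μ` holds. -/
theorem cut_valid_mgc {ι : Type*} (Ij : Finset ι) (c : ℕ) (hc : 1 ≤ c)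
    (μ : ℝ) (hμ : 0 < μ)
    (lam : ι → ℝ) (hlam : ∀ i ∈ Ij, 0 ≤ lam i)
    (x : ι → ℝ) (hx : ∀ i ∈ Ij, x i = 0 ∨ x i = 1)
    (κ : ℝ) (hκ : 0 ≤ κ)
    (z : ℝ) (hz : z = 0 ∨ z = 1)
    (W : ℝ) (hW : 0 ≤ W)
    (A B : ℝ) (hB : 0 ≤ B)
    (htan : ∀ ρ ∈ Set.Ioo (0 : ℝ) 1, A + B * ρ ≤ Wnu ρ c)
    (hcond : z = 1 →
      (∑ i ∈ Ij, lam i * x i) / (μ * (c : ℝ)) ∈ Set.Ioo (0 : ℝ) 1 ∧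
      κ * Wnu ((∑ i ∈ Ij, lam i * x i) / (μ * (c : ℝ))) c / (μ * (c : ℝ)) + 1 / μ ≤ W) :
    κ * (A * z / (μ * (c : ℝ)) +
        B * (∑ i ∈ Ij, lam i * (z + x i - 1)) / (μ ^ 2 * (c : ℝ) ^ 2)) + z / μ ≤ W :=
  cut_valid_mgc_general Ij c μ hμ lam hlam x hx κ hκ z hz W hW A B hB htan hcond
end
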